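/- On ℝ⁶ with coordinates (γ₁,γ₂,γ₃,M₁,M₂,M₃), define the antisymmetric matrix fields P₁, P₂, P₃ by their upper-triangular entries: P₁: (1,2) ↦ −M₃, (1,3) ↦ M₂, (1,5) ↦ −a/2, (2,3) ↦ −M₁, (2,4) ↦ a/2, all other upper entries 0; P₂: (1,2) ↦ 2γ₃, (1,3) ↦ −2γ₂, (2,3) ↦ 2γ₁, (4,5) ↦ −a, all other upper entries 0; P₃: (i,j) ↦ 0 for i,j ≤ 3, (i, j+3) ↦ ∑_k ε_{ijk} γ_k, (i+3, j+3) ↦ ∑_k ε_{ijk} M_k for i,j ∈ {1,2,3}. Then for the Lagrange vector field X = (2(γ₃M₂−γ₂M₃), 2(γ₁M₃−γ₃M₁), 2(γ₂M₁−γ₁M₂), −aγ₂, aγ₁, 0) and the first integrals f₁ = γ₁²+γ₂²+γ₃², f₂ = γ₁M₁+γ₂M₂+γ₃M₃, f₃ = M₁²+M₂²+M₃²+aγ₃: X = P₁∇f₁ = P₂∇f₂ = P₃∇f₃ at every point (where (P∇f)_i = ∑_j P_{ij} ∂f/∂x_j), and L_X P_i = 0 for i = 1,2,3, where (L_X P)_{ij}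 = ∑_k ( X_k ∂P_{ij}/∂x_k − P_{kj} ∂X_i/∂x_k − P_{ik} ∂X_j/∂x_k ). -/

import Mathlib

noncomputable section

open scoped BigOperators

/-- Partial derivative of `f` in the `i`-th coordinate direction at `x`. -/
def pd {n : ℕ} (i : Fin n) (f : (Fin n → ℝ) → ℝ) (x : Fin n → ℝ) : ℝ :=
  fderiv ℝ f x (Pi.single i 1)

/-- The Lagrange vector field on `ℝ⁶` with coordinates
`(x₁,…,x₆) = (γ₁,γ₂,γ₃,M₁,M₂,M₃)`. -/
def lagX (a : ℝ) (x : Fin 6 → ℝ) : Fin 6 → ℝ :=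
  ![2 * (x 2 * x 4 - x 1 * x 5), 2 * (x 0 * x 5 - x 2 * x 3),
    2 * (x 1 * x 3 - x 0 * x 4), -(a * x 1), a * x 0, 0]

/-- `f₁ = γ₁² + γ₂² + γ₃²`. -/
def lagF₁ (x : Fin 6 → ℝ) : ℝ := x 0 ^ 2 + x 1 ^ 2 + x 2 ^ 2

/-- `f₂ = γ₁M₁ + γ₂M₂ + γ₃M₃`. -/
def lagF₂ (x : Fin 6 → ℝ) : ℝ := x 0 * x 3 + x 1 * x 4 + x 2 * x 5

/-- `f₃ = M₁² + M₂² + M₃² + aγ₃`. -/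
def lagF₃ (a : ℝ) (x : Fin 6 → ℝ) : ℝ := x 3 ^ 2 + x 4 ^ 2 + x 5 ^ 2 + a * x 2

/-- `f₄ = M₃`. -/
def lagF₄ (x : Fin 6 → ℝ) : ℝ := x 5

/-- Contraction of a matrix field with the gradient of a function:
`(P∇f)_i = ∑_j P_{ij} ∂f/∂x_j`. -/
def Pgrad {n : ℕ} (P : (Fin n → ℝ) → Matrix (Fin n) (Fin n) ℝ)
    (f : (Fin n → ℝ) → ℝ) (x : Fin n → ℝ) (i : Fin n) : ℝ :=
  ∑ j, P x i j * pd j f x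

/-- Lie derivative of a (2,0) tensor (matrix field) `P` along the vector field `X`:
`(L_X P)_{ij} = ∑_k (X_k ∂P_{ij}/∂x_k − P_{kj} ∂X_i/∂x_k − P_{ik} ∂X_j/∂x_k)`. -/
def matLie {n : ℕ} (X : (Fin n → ℝ) → Fin n → ℝ)
    (P : (Fin n → ℝ) → Matrix (Fin n) (Fin n) ℝ) (x : Fin n → ℝ) (i j : Fin n) : ℝ :=
  ∑ k, (X x k * pd k (fun y => P y i j) x - P x k j * pd k (fun y => X y i) x
        - P x i k * pd k (fun y => X y j) x)

/-- The Jacobiator of an antisymmetric matrix field; it vanishes identically iff `P`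
satisfies the Jacobi identity (i.e. is a Poisson bivector). -/
def jacobiator {n : ℕ} (P : (Fin n → ℝ) → Matrix (Fin n) (Fin n) ℝ)
    (x : Fin n → ℝ) (i j k : Fin n) : ℝ :=
  ∑ l, (P x l i * pd l (fun y => P y j k) x + P x l j * pd l (fun y => P y k i) x
        + P x l k * pd l (fun y => P y i j) x)

/-- The invariant Poisson bivector `P₁` of the Lagrange case: upper entries
`(1,2) ↦ −M₃`, `(1,3) ↦ M₂`, `(1,5) ↦ −a/2`, `(2,3) ↦ −M₁`, `(2,4) ↦ a/2`. -/
def lagP₁ (a : ℝ) (x : Fin 6 → ℝ) : Matrix (Fin 6) (Fin 6) ℝ :=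
  !![0, -(x 5), x 4, 0, -(a / 2), 0;
     x 5, 0, -(x 3), a / 2, 0, 0;
     -(x 4), x 3, 0, 0, 0, 0;
     0, -(a / 2), 0, 0, 0, 0;
     a / 2, 0, 0, 0, 0, 0;
     0, 0, 0, 0, 0, 0]

/-- The invariant Poisson bivector `P₂` of the Lagrange case: upper entries
`(1,2) ↦ 2γ₃`, `(1,3) ↦ −2γ₂`, `(2,3) ↦ 2γ₁`, `(4,5) ↦ −a`. -/
def lagP₂ (a : ℝ) (x : Fin 6 → ℝ) : Matrix (Fin 6) (Fin 6) ℝ :=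
  !![0, 2 * x 2, -(2 * x 1), 0, 0, 0;
     -(2 * x 2), 0, 2 * x 0, 0, 0, 0;
     2 * x 1, -(2 * x 0), 0, 0, 0, 0;
     0, 0, 0, 0, -a, 0;
     0, 0, 0, a, 0, 0;
     0, 0, 0, 0, 0, 0]

/-- The canonical Lie–Poisson bivector `P₃ = P_c` on `e*(3)`:
`(i,j) ↦ 0` for `i,j ≤ 3`, `(i,j+3) ↦ ∑_k ε_{ijk}γ_k`, `(i+3,j+3) ↦ ∑_k ε_{ijk}M_k`. -/
def lagP₃ (x : Fin 6 → ℝ) : Matrix (Fin 6) (Fin 6) ℝ :=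
  !![0, 0, 0, 0, x 2, -(x 1);
     0, 0, 0, -(x 2), 0, x 0;
     0, 0, 0, x 1, -(x 0), 0;
     0, x 2, -(x 1), 0, x 5, -(x 4);
     -(x 2), 0, x 0, -(x 5), 0, x 3;
     x 1, -(x 0), 0, x 4, -(x 3), 0]

/-!
The identities `X = Pᵢ∇fᵢ` are direct computations. Invariance is then the general fact that a
Hamiltonian vector field preserves its Poisson bivector: for antisymmetric `P`,
`(L_{P∇f} P)_{ij} = ∑_l ∂_l f · J(i, j, l)` with `J` the Jacobiator, because the second-derivative
terms cancel by antisymmetry of `P` and symmetry of the Hessian. So it remains to check the Jacobi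
identity for each `Pᵢ`; the Jacobiator of an antisymmetric field is alternating, hence it suffices
to check it on strictly increasing triples of indices.
-/

section PartialDerivative

variable {n : ℕ} {i : Fin n} {f g : (Fin n → ℝ) → ℝ} {x : Fin n → ℝ}

@[simp] theorem pd_const (c : ℝ) : pd i (fun _ => c) x = 0 := by
  simp [pd]

@[simp] theorem pd_apply (j : Fin n) : pd i (fun y => y j) x = if j = i then 1 else 0 := by
  simp [pd, (hasFDerivAt_apply j x).fderiv, Pi.single_apply]

@[simp] theorem pd_neg : pd i (fun y => -f y) x = -pd i f x := by
  simp [pd]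

theorem pd_add (hf : DifferentiableAt ℝ f x) (hg : DifferentiableAt ℝ g x) :
    pd i (fun y => f y + g y) x = pd i f x + pd i g x := by
  simp [pd, fderiv_fun_add hf hg]

theorem pd_mul (hf : DifferentiableAt ℝ f x) (hg : DifferentiableAt ℝ g x) :
    pd i (fun y => f y * g y) x = pd i f x * g x + f x * pd i g x := by
  simp [pd, fderiv_fun_mul hf hg]; ring

theorem pd_pow (hf : DifferentiableAt ℝ f x) (m : ℕ) :
    pd i (fun y => f y ^ m) x = m * f x ^ (m - 1) * pd i f x := by
  simp [pd, fderiv_fun_pow m hf, mul_assoc]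

theorem pd_sum {ι : Type*} (s : Finset ι) {F : ι → (Fin n → ℝ) → ℝ}
    (hF : ∀ j ∈ s, DifferentiableAt ℝ (F j) x) :
    pd i (fun y => ∑ j ∈ s, F j y) x = ∑ j ∈ s, pd i (F j) x := by
  simp [pd, fderiv_fun_sum hF]

theorem differentiableAt_pd (hf : ContDiffAt ℝ 2 f x) (j : Fin n) :
    DifferentiableAt ℝ (pd j f) x :=
  ((hf.fderiv_right (m := 1) (by norm_num)).differentiableAt one_ne_zero).clm_apply
    (differentiableAt_const _)

theorem pd_pd_comm (hf : ContDiffAt ℝ 2 f x) (j k : Fin n) :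
    pd k (pd j f) x = pd j (pd k f) x := by
  have hd : DifferentiableAt ℝ (fderiv ℝ f) x :=
    (hf.fderiv_right (m := 1) (by norm_num)).differentiableAt one_ne_zero
  change fderiv ℝ (fun y => fderiv ℝ f y (Pi.single j 1)) x (Pi.single k 1) =
    fderiv ℝ (fun y => fderiv ℝ f y (Pi.single k 1)) x (Pi.single j 1)
  rw [fderiv_clm_apply hd (differentiableAt_const _),
    fderiv_clm_apply hd (differentiableAt_const _)]
  simpa using hf.isSymmSndFDerivAt (by simp) (Pi.single k 1) (Pi.single j 1)

end PartialDerivative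

theorem eq_zero_of_alternating {ι : Type*} [LinearOrder ι] {T : ι → ι → ι → ℝ}
    (hswap : ∀ i j k, T i j k = -T j i k) (hcycle : ∀ i j k, T i j k = T j k i)
    (hlt : ∀ i j k, i < j → j < k → T i j k = 0) (i j k : ι) : T i j k = 0 := by
  have hswap' : ∀ i j k, T i j k = -T i k j := fun i j k => by
    rw [hcycle i j k, hswap j k i, hcycle i k j]
  have hself : ∀ i k, T i i k = 0 := fun i k => by linarith [hswap i i k]
  have hfirst_lt : ∀ i j k, i < j → T i j k = 0 := by
    intro i j k hij
    rcases lt_trichotomy j k with hjk | rfl | hkj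
    · exact hlt i j k hij hjk
    · linarith [hswap' i j j]
    rcases lt_trichotomy i k with hik | rfl | hki
    · rw [hswap', hlt i k j hik hkj, neg_zero]
    · rw [hswap', hself, neg_zero]
    · rw [← hcycle k i j, hlt k i j hki hij]
  rcases lt_trichotomy i j with hij | rfl | hji
  · exact hfirst_lt i j k hij
  · exact hself i k
  · rw [hswap, hfirst_lt j i k hji, neg_zero]

open scoped Matrix

section PoissonBivector

variable {n : ℕ} {P : (Fin n → ℝ) → Matrix (Fin n) (Fin n) ℝ} {f : (Fin n → ℝ) → ℝ}
  {x : Fin n → ℝ}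

theorem apply_eq_neg_of_transpose_eq_neg {A : Matrix (Fin n) (Fin n) ℝ} (hA : Aᵀ = -A)
    (i j : Fin n) : A i j = -A j i := by
  rw [← Matrix.transpose_apply A, hA, Matrix.neg_apply]

theorem pd_entry_antisymm (hskew : ∀ y, (P y)ᵀ = -P y) (k i j : Fin n) :
    pd k (fun y => P y i j) x = -pd k (fun y => P y j i) x := by
  simp_rw [apply_eq_neg_of_transpose_eq_neg (hskew _) i j, pd_neg]

theorem jacobiator_swap (hskew : ∀ y, (P y)ᵀ = -P y) (i j k : Fin n) :
    jacobiator P x i j k = -jacobiator P x j i k := by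
  rw [jacobiator, jacobiator, ← Finset.sum_neg_distrib]
  refine Finset.sum_congr rfl fun l _ => ?_
  rw [pd_entry_antisymm hskew l i k, pd_entry_antisymm hskew l k j,
    pd_entry_antisymm hskew l j i]
  ring

theorem jacobiator_cycle (i j k : Fin n) : jacobiator P x i j k = jacobiator P x j k i :=
  Finset.sum_congr rfl fun _ _ => by ring

theorem jacobiator_eq_zero_of_lt (hskew : ∀ y, (P y)ᵀ = -P y)
    (hlt : ∀ i j k, i < j → j < k → jacobiator P x i j k = 0) (i j k : Fin n) :
    jacobiator P x i j k = 0 :=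
  eq_zero_of_alternating (jacobiator_swap hskew) jacobiator_cycle hlt i j k

theorem pd_pgrad (hP : ∀ j, DifferentiableAt ℝ (fun y => P y i j) x)
    (hf : ContDiffAt ℝ 2 f x) (k : Fin n) :
    pd k (fun y => Pgrad P f y i) x =
      ∑ l, (pd k (fun y => P y i l) x * pd l f x + P x i l * pd k (pd l f) x) := by
  simp only [Pgrad]
  rw [pd_sum (F := fun l y => P y i l * pd l f y) _
    fun l _ => (hP l).mul (differentiableAt_pd hf l)]
  exact Finset.sum_congr rfl fun l _ => pd_mul (hP l) (differentiableAt_pd hf l)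

theorem matLie_pgrad (hskew : ∀ y, (P y)ᵀ = -P y)
    (hP : ∀ i j, DifferentiableAt ℝ (fun y => P y i j) x) (hf : ContDiffAt ℝ 2 f x)
    (i j : Fin n) :
    matLie (Pgrad P f) P x i j = ∑ l, pd l f x * jacobiator P x i j l := by
  have hPx := apply_eq_neg_of_transpose_eq_neg (hskew x)
  have hessian : ∑ k, ∑ l, P x i k * P x j l * pd k (pd l f) x =
      -∑ k, ∑ l, P x k j * P x i l * pd k (pd l f) x := by
    rw [Finset.sum_comm, ← Finset.sum_neg_distrib]
    refine Finset.sum_congr rfl fun k _ => ?_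
    rw [← Finset.sum_neg_distrib]
    refine Finset.sum_congr rfl fun l _ => ?_
    rw [pd_pd_comm hf, hPx j k]
    ring
  calc matLie (Pgrad P f) P x i j
      = ∑ k, ∑ l, (pd l f x * (P x k l * pd k (fun y => P y i j) x
            + P x k j * pd k (fun y => P y l i) x + P x k i * pd k (fun y => P y j l) x)
          - (P x k j * P x i l * pd k (pd l f) x + P x i k * P x j l * pd k (pd l f) x)) := by
        refine Finset.sum_congr rfl fun k _ => ?_
        rw [pd_pgrad (hP i) hf, pd_pgrad (hP j) hf, Pgrad, Finset.sum_mul, Finset.mul_sum,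
          Finset.mul_sum, ← Finset.sum_sub_distrib, ← Finset.sum_sub_distrib]
        refine Finset.sum_congr rfl fun l _ => ?_
        rw [pd_entry_antisymm hskew k i l, hPx i k]
        ring
    _ = ∑ l, pd l f x * jacobiator P x i j l := by
        have hB : ∑ k, ∑ l, (P x k j * P x i l * pd k (pd l f) x
            + P x i k * P x j l * pd k (pd l f) x) = 0 := by
          simp only [Finset.sum_add_distrib, hessian, add_neg_cancel]
        simp only [Finset.sum_sub_distrib, hB, sub_zero]
        rw [Finset.sum_comm]
        simp only [jacobiator, Finset.mul_sum]
        exact Finset.sum_congr rfl fun l _ => Finset.sum_congr rfl fun k _ => by ring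

theorem matLie_pgrad_eq_zero (hskew : ∀ y, (P y)ᵀ = -P y)
    (hP : ∀ i j, DifferentiableAt ℝ (fun y => P y i j) x) (hf : ContDiffAt ℝ 2 f x)
    (hJ : ∀ i j k, jacobiator P x i j k = 0) (i j : Fin n) :
    matLie (Pgrad P f) P x i j = 0 := by
  simp [matLie_pgrad hskew hP hf, hJ]

end PoissonBivector

section LagrangeTop

variable (a : ℝ) (x : Fin 6 → ℝ)

theorem lagP₁_transpose (y : Fin 6 → ℝ) : (lagP₁ a y)ᵀ = -lagP₁ a y := by
  ext i j; fin_cases i <;> fin_cases j <;> simp [lagP₁]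

theorem lagP₂_transpose (y : Fin 6 → ℝ) : (lagP₂ a y)ᵀ = -lagP₂ a y := by
  ext i j; fin_cases i <;> fin_cases j <;> simp [lagP₂]

theorem lagP₃_transpose (y : Fin 6 → ℝ) : (lagP₃ y)ᵀ = -lagP₃ y := by
  ext i j; fin_cases i <;> fin_cases j <;> simp [lagP₃]

theorem differentiableAt_lagP₁_apply (i j : Fin 6) :
    DifferentiableAt ℝ (fun y => lagP₁ a y i j) x := by
  fin_cases i <;> fin_cases j <;> simp [lagP₁] <;> fun_prop

theorem differentiableAt_lagP₂_apply (i j : Fin 6) :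
    DifferentiableAt ℝ (fun y => lagP₂ a y i j) x := by
  fin_cases i <;> fin_cases j <;> simp [lagP₂] <;> fun_prop

theorem differentiableAt_lagP₃_apply (i j : Fin 6) :
    DifferentiableAt ℝ (fun y => lagP₃ y i j) x := by
  fin_cases i <;> fin_cases j <;> simp [lagP₃] <;> fun_prop

theorem contDiff_lagF₁ : ContDiff ℝ 2 lagF₁ := by
  unfold lagF₁; fun_prop

theorem contDiff_lagF₂ : ContDiff ℝ 2 lagF₂ := by
  unfold lagF₂; fun_prop

theorem contDiff_lagF₃ : ContDiff ℝ 2 (lagF₃ a) := by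
  unfold lagF₃; fun_prop

theorem pgrad_lagP₁_lagF₁ : Pgrad (lagP₁ a) lagF₁ = lagX a := by
  ext y i
  unfold Pgrad lagF₁
  fin_cases i <;>
    simp (disch := fun_prop) [Fin.sum_univ_six, lagP₁, lagX, pd_add, pd_pow] <;> ring

theorem pgrad_lagP₂_lagF₂ : Pgrad (lagP₂ a) lagF₂ = lagX a := by
  ext y i
  unfold Pgrad lagF₂
  fin_cases i <;>
    simp (disch := fun_prop) [Fin.sum_univ_six, lagP₂, lagX, pd_add, pd_mul] <;> ring

theorem pgrad_lagP₃_lagF₃ : Pgrad lagP₃ (lagF₃ a) = lagX a := by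
  ext y i
  unfold Pgrad lagF₃
  fin_cases i <;>
    simp (disch := fun_prop) [Fin.sum_univ_six, lagP₃, lagX, pd_add, pd_mul, pd_pow] <;> ring

theorem jacobiator_lagP₁ (i j k : Fin 6) : jacobiator (lagP₁ a) x i j k = 0 := by
  refine jacobiator_eq_zero_of_lt (lagP₁_transpose a) (fun i j k hij hjk => ?_) i j k
  fin_cases i <;> fin_cases j <;> fin_cases k <;> simp at hij hjk <;>
    simp [jacobiator, Fin.sum_univ_six, lagP₁]

theorem jacobiator_lagP₂ (i j k : Fin 6) : jacobiator (lagP₂ a) x i j k = 0 := by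
  refine jacobiator_eq_zero_of_lt (lagP₂_transpose a) (fun i j k hij hjk => ?_) i j k
  fin_cases i <;> fin_cases j <;> fin_cases k <;> simp at hij hjk <;>
    simp (disch := fun_prop) [jacobiator, Fin.sum_univ_six, lagP₂, pd_mul]

theorem jacobiator_lagP₃ (i j k : Fin 6) : jacobiator lagP₃ x i j k = 0 := by
  refine jacobiator_eq_zero_of_lt lagP₃_transpose (fun i j k hij hjk => ?_) i j k
  fin_cases i <;> fin_cases j <;> fin_cases k <;> simp at hij hjk <;>
    simp [jacobiator, Fin.sum_univ_six, lagP₃]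

end LagrangeTop

/-- The Lagrange vector field is multi-Hamiltonian: `X = P₁∇f₁ = P₂∇f₂ = P₃∇f₃`, and
all three bivectors are invariant: `L_X P_i = 0` for `i = 1,2,3`. -/
theorem lagrange_trihamiltonian (a : ℝ) (x : Fin 6 → ℝ) :
    (∀ i, Pgrad (lagP₁ a) lagF₁ x i = lagX a x i) ∧
    (∀ i, Pgrad (lagP₂ a) lagF₂ x i = lagX a x i) ∧
    (∀ i, Pgrad lagP₃ (lagF₃ a) x i = lagX a x i) ∧
    (∀ i j, matLie (lagX a) (lagP₁ a) x i j = 0) ∧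
    (∀ i j, matLie (lagX a) (lagP₂ a) x i j = 0) ∧
    (∀ i j, matLie (lagX a) lagP₃ x i j = 0) := by
  have ham₁ := pgrad_lagP₁_lagF₁ a
  have ham₂ := pgrad_lagP₂_lagF₂ a
  have ham₃ := pgrad_lagP₃_lagF₃ a
  refine ⟨by simp [ham₁], by simp [ham₂], by simp [ham₃], ?_, ?_, ?_⟩
  · rw [← ham₁]
    exact matLie_pgrad_eq_zero (lagP₁_transpose a) (differentiableAt_lagP₁_apply a x)
      contDiff_lagF₁.contDiffAt (jacobiator_lagP₁ a x)
  · rw [← ham₂]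
    exact matLie_pgrad_eq_zero (lagP₂_transpose a) (differentiableAt_lagP₂_apply a x)
      contDiff_lagF₂.contDiffAt (jacobiator_lagP₂ a x)
  · rw [← ham₃]
    exact matLie_pgrad_eq_zero lagP₃_transpose (differentiableAt_lagP₃_apply x)
      (contDiff_lagF₃ a).contDiffAt (jacobiator_lagP₃ x)
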